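/- Let n ≥ 1 and k ≥ 0 be integers and x > 0. Then −(ψ(x)/n)·T'_{n,k}(x)·P'_{n,k}(x) = k(n+k−1)·P_{n+1,k−2}(x) − (k−1)(n+k)·P_{n+1,k−1}(x) − k(n+k+1)·P_{n+1,k}(x) + (k+1)(n+k)·P_{n+1,k+1}(x), where T'_{n,k}(x) = −k(k−1)/x² + (n+k)(n+k+1)/(1+x)², P'_{n,k} is the derivative of P_{n,k}, and terms with negative second index are interpreted as 0. -/

import Mathlib

open MeasureTheory Filter Set

/-- Baskakov basis functions `P_{n,k}(x)`, with `P_{n,k} := 0` for `k < 0`. -/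
noncomputable def P (n : ℕ) (k : ℤ) (x : ℝ) : ℝ :=
  if k < 0 then 0
  else (Nat.choose (n + k.toNat - 1) k.toNat : ℝ) * x ^ k.toNat * (1 + x) ^ (-(n : ℤ) - k)

/-- The weight `ψ(x) = x(1+x)`. -/
noncomputable def psi (x : ℝ) : ℝ := x * (1 + x)

/-- The differential operator `D̃ f = ψ f''`. -/
noncomputable def Dt (f : ℝ → ℝ) : ℝ → ℝ := fun x => psi x * deriv (deriv f) x

/-- The functionals `v_{n,k}`. -/
noncomputable def v (n k : ℕ) (f : ℝ → ℝ) : ℝ :=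
  if k = 0 then f 0
  else ((n : ℝ) + 1) * ∫ t in Set.Ioi (0 : ℝ), P (n + 2) ((k : ℤ) - 1) t * f t

/-- The Goodman–Sharma–Baskakov operator `V_n`. -/
noncomputable def V (n : ℕ) (f : ℝ → ℝ) (x : ℝ) : ℝ :=
  ∑' k : ℕ, v n k f * P n (k : ℤ) x

/-- The modified operator `Ṽ_n`. -/
noncomputable def Vt (n : ℕ) (f : ℝ → ℝ) (x : ℝ) : ℝ :=
  ∑' k : ℕ, v n k f * (P n (k : ℤ) x - (1 / (n : ℝ)) * Dt (P n (k : ℤ)) x)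

/-- Supremum norm on `[0,∞)`. -/
noncomputable def supNorm (f : ℝ → ℝ) : ℝ := ⨆ x ∈ Set.Ici (0 : ℝ), |f x|

/-- `f` is bounded and continuous on `[0,∞)`. -/
def BddContOn (f : ℝ → ℝ) : Prop :=
  ContinuousOn f (Set.Ici 0) ∧ ∃ M, ∀ x ∈ Set.Ici (0 : ℝ), |f x| ≤ M

/-- The space `W²(ψ)`: `g, g'` (locally) differentiable on `(0,∞)` and `D̃ g` bounded. -/
def MemW2 (g : ℝ → ℝ) : Prop :=
  DifferentiableOn ℝ g (Set.Ioi 0) ∧ DifferentiableOn ℝ (deriv g) (Set.Ioi 0) ∧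
    ∃ M, ∀ x ∈ Set.Ioi (0 : ℝ), |Dt g x| ≤ M

/-- The space `W²₀(ψ)`: members of `W²(ψ)` with `D̃ g(x) → 0` as `x → 0⁺`. -/
def MemW20 (g : ℝ → ℝ) : Prop :=
  MemW2 g ∧ Filter.Tendsto (Dt g) (nhdsWithin 0 (Set.Ioi 0)) (nhds 0)

/-- The K-functional `K(f,t)`. -/
noncomputable def Kfun (f : ℝ → ℝ) (t : ℝ) : ℝ :=
  sInf {a : ℝ | ∃ g : ℝ → ℝ, MemW20 g ∧ MemW2 (Dt g) ∧
    a = supNorm (fun x => f x - g x) + t * supNorm (Dt (Dt g))}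

/-- The function `T_{n,k}(x)`. -/
noncomputable def T (n : ℕ) (k : ℤ) (x : ℝ) : ℝ :=
  (k : ℝ) * ((k : ℝ) - 1) * (1 + x) / x - 2 * (k : ℝ) * ((n : ℝ) + (k : ℝ))
    + ((n : ℝ) + (k : ℝ)) * ((n : ℝ) + (k : ℝ) + 1) * x / (1 + x)

/-! Two facts about the Baskakov basis make the identity a linear combination: the derivative
formula `P'_{n,k} = n (P_{n+1,k-1} - P_{n+1,k})` and the index shift
`(m + j) x P_{m,j} = (j + 1) (1 + x) P_{m,j+1}`. After the first, the left side consists of the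
products `k(k-1)(1+x)/x · P_{n+1,i}` and `(n+k)(n+k+1) x/(1+x) · P_{n+1,i}` for `i = k-1, k`, and the
shift at `j = k-2, k-1, k` turns each of them into a term of the right side. -/

theorem zpow_neg_natCast_sub_natCast {G : Type*} [DivisionMonoid G] (a : G) (m k : ℕ) :
    a ^ (-(m : ℤ) - k) = (a ^ (m + k))⁻¹ := by
  rw [← zpow_natCast, ← zpow_neg, Nat.cast_add, neg_add']

theorem P_natCast (n k : ℕ) (x : ℝ) :
    P n k x = (n + k - 1).choose k * x ^ k / (1 + x) ^ (n + k) := by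
  simp [P, zpow_neg_natCast_sub_natCast, div_eq_mul_inv]

theorem P_of_neg (n : ℕ) {k : ℤ} (hk : k < 0) (x : ℝ) : P n k x = 0 := if_pos hk

theorem Nat.choose_sub_one_mul (N i : ℕ) : (N - 1).choose i * N = N.choose (i + 1) * (i + 1) := by
  cases N with
  | zero => simp
  | succ N => rw [Nat.add_sub_cancel, mul_comm]; exact Nat.add_one_mul_choose_eq N i

theorem mul_P_eq_mul_P_add_one (m : ℕ) (j : ℤ) {x : ℝ} (hx : 1 + x ≠ 0) :
    (m + j) * x * P m j x = (j + 1) * (1 + x) * P m (j + 1) x := by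
  rcases j with i | i
  · have hchoose : ((m + i - 1).choose i : ℝ) * (m + i) = (m + i).choose (i + 1) * (i + 1) := by
      exact_mod_cast Nat.choose_sub_one_mul (m + i) i
    simp only [Int.ofNat_eq_natCast, ← Nat.cast_add_one, P_natCast, Int.cast_natCast,
      show m + (i + 1) - 1 = m + i by omega]
    field_simp
    push_cast
    linear_combination x ^ (i + 1) * (1 + x) ^ (m + i + 1) * hchoose
  · rcases i with _ | i
    · simp [P_of_neg m (by norm_num : (-1 : ℤ) < 0)]
    · rw [P_of_neg m (Int.negSucc_lt_zero _), P_of_neg m (by omega)]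
      ring

theorem hasDerivAt_P (n k : ℕ) {x : ℝ} (hx : 1 + x ≠ 0) :
    HasDerivAt (P n k) (n * (P (n + 1) (k - 1) x - P (n + 1) k x)) x := by
  have hd : HasDerivAt (fun y : ℝ => (n + k - 1).choose k * y ^ k * (1 + y) ^ (-(n : ℤ) - k))
      ((n + k - 1).choose k * (k * x ^ (k - 1)) * (1 + x) ^ (-(n : ℤ) - k)
        + (n + k - 1).choose k * x ^ k * ((-(n : ℤ) - k : ℤ) * (1 + x) ^ (-(n : ℤ) - k - 1) * 1)) x :=
    ((hasDerivAt_pow k x).const_mul _).mul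
      ((hasDerivAt_zpow _ _ (Or.inl hx)).comp x ((hasDerivAt_id x).const_add 1))
  rw [show P n k = fun y : ℝ => (n + k - 1).choose k * y ^ k * (1 + y) ^ (-(n : ℤ) - k) from
    funext fun y => by simp [P]]
  refine hd.congr_deriv ?_
  rw [zpow_sub_one₀ hx, zpow_neg_natCast_sub_natCast]
  rcases k with _ | i
  · rw [P_natCast (n + 1) 0, P_of_neg (n + 1) (by norm_num)]
    field_simp
    simp
    ring
  · rw [P_natCast (n + 1) (i + 1), show ((i + 1 : ℕ) : ℤ) - 1 = i by omega, P_natCast (n + 1) i]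
    have h1 : ((n + i).choose (i + 1) : ℝ) * (i + 1) = (n + i).choose i * n := by
      exact_mod_cast (Nat.add_sub_cancel n i ▸ Nat.choose_succ_right_eq (n + i) i)
    have h2 : ((n + i).choose (i + 1) : ℝ) * (n + i + 1) = (n + i + 1).choose (i + 1) * n := by
      have h := Nat.choose_mul_succ_eq (n + i) (i + 1)
      rw [show n + i + 1 - (i + 1) = n by omega] at h
      exact_mod_cast h
    simp only [show n + (i + 1) - 1 = n + i by omega, show n + 1 + i - 1 = n + i by omega,
      show n + 1 + (i + 1) - 1 = n + i + 1 by omega, Nat.add_sub_cancel]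
    field_simp
    push_cast
    linear_combination x ^ i * (1 + x) ^ (2 * n + 2 * i + 4) * h1
      - x ^ (i + 1) * (1 + x) ^ (2 * n + 2 * i + 3) * h2

theorem T'_P'_identity (n : ℕ) (hn : 1 ≤ n) (k : ℕ) (x : ℝ) (hx : 0 < x) :
    -(psi x / (n : ℝ))
        * (-((k : ℝ) * ((k : ℝ) - 1)) / x ^ 2
            + ((n : ℝ) + (k : ℝ)) * ((n : ℝ) + (k : ℝ) + 1) / (1 + x) ^ 2)
        * deriv (P n (k : ℤ)) x =
      (k : ℝ) * ((n : ℝ) + (k : ℝ) - 1) * P (n + 1) ((k : ℤ) - 2) x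
        - ((k : ℝ) - 1) * ((n : ℝ) + (k : ℝ)) * P (n + 1) ((k : ℤ) - 1) x
        - (k : ℝ) * ((n : ℝ) + (k : ℝ) + 1) * P (n + 1) (k : ℤ) x
        + ((k : ℝ) + 1) * ((n : ℝ) + (k : ℝ)) * P (n + 1) ((k : ℤ) + 1) x := by
  have h1x : 1 + x ≠ 0 := by positivity
  have hn' : (n : ℝ) ≠ 0 := by positivity
  have shift₂ := mul_P_eq_mul_P_add_one (n + 1) (k - 2) h1x
  have shift₁ := mul_P_eq_mul_P_add_one (n + 1) (k - 1) h1x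
  have shift₀ := mul_P_eq_mul_P_add_one (n + 1) k h1x
  rw [show (k : ℤ) - 2 + 1 = k - 1 by ring] at shift₂
  rw [sub_add_cancel] at shift₁
  push_cast at shift₂ shift₁ shift₀
  rw [(hasDerivAt_P n k h1x).deriv, psi]
  field_simp
  linear_combination (-(k * (1 + x))) * shift₂ + ((1 + x) * (k - 1) - x * (n + k + 1)) * shift₁
    + x * (n + k) * shift₀
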